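/- Let A take values in a finite set 𝒜, Z a random variable, and suppose the positivity condition P(A = a | Z) > 0 a.s. for every a ∈ 𝒜. Then for a bounded random variable Y with Y(a) ⫫ A | Z and consistency Y = Y(A), the map h(a) = E[E[Y | A = a, Z]] satisfies h(a) = E[Y(a)] for all a ∈ 𝒜, and the inverse-probability-weighting identity E[Y(a)] = E[ 1{A = a} Y / P(A = a | Z) ] also holds. -/

import Mathlib

/-!
Let `w = 1{A = a}` and `e = E[w | Z]`. Conditional independence of `Y(a)` and `A` given `Z` makes
`E[Y(a) w | Z] = E[Y(a) | Z] e`: for a.e. `ω` the two variables are independent under the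
regular conditional distribution given `Z`. Pulling the `σ(Z)`-measurable factor `1 / e` out of a
conditional expectation then gives `E[Y(a) w / e] = E[E[Y(a) | Z]] = E[Y(a)]`, which is the IPW
identity once `Y(a) w = Y w`. The weight `w / e` is integrable with `E[w / e] ≤ 1`, by monotone
convergence along the truncations `min (1 / e) n`.

For the regression form, `h(a, Z) w = E[Y | A, Z] w`, so pulling out `1 / e` at level `σ(Z)` and
then `w / e` at level `σ(A, Z)` turns `E[h(a, Z)]` into the same IPW expression `E[Y w / e]`.
-/

open MeasureTheory ProbabilityTheory Filter Topology

section
variable {Ω : Type*} {m m' mΩ : MeasurableSpace Ω} {μ : Measure Ω}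

theorem measurable_eval_of_countable {𝒜 β : Type*} [MeasurableSpace 𝒜] [Countable 𝒜]
    [MeasurableSingletonClass 𝒜] [MeasurableSpace β] {A : Ω → 𝒜} {Y : 𝒜 → Ω → β}
    (hA : Measurable A) (hY : ∀ b, Measurable (Y b)) :
    Measurable fun ω => Y (A ω) ω :=
  (measurable_from_prod_countable_left (f := fun p : Ω × 𝒜 => Y p.2 p.1) hY).comp
    (measurable_id.prodMk hA)

theorem ProbabilityTheory.CondIndepFun.condExp_mul_ae_eq [StandardBorelSpace Ω]
    [IsFiniteMeasure μ] {hm : m ≤ mΩ} {f g : Ω → ℝ} (hfg : CondIndepFun m hm f g μ)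
    (hf : Measurable f) (hg : Measurable g) (hfi : Integrable f μ) (hgi : Integrable g μ)
    (hfgi : Integrable (f * g) μ) :
    μ[f * g | m] =ᵐ[μ] μ[f | m] * μ[g | m] := by
  have hker := ae_of_ae_trim hm
    ((condIndepFun_iff_map_prod_eq_prod_map_map hf hg).1 hfg)
  filter_upwards [hker, condExp_ae_eq_integral_condExpKernel hm hfgi,
    condExp_ae_eq_integral_condExpKernel hm hfi,
    condExp_ae_eq_integral_condExpKernel hm hgi] with ω hω hfgω hfω hgω
  rw [hfgω, Pi.mul_apply, hfω, hgω]
  have hind : IndepFun f g (condExpKernel μ m ω) := by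
    rw [indepFun_iff_map_prod_eq_prod_map_map hf.aemeasurable hg.aemeasurable]
    simpa [Kernel.map_apply _ (hf.prodMk hg), Kernel.map_apply _ hf, Kernel.map_apply _ hg,
      Kernel.prod_apply] using hω
  exact hind.integral_mul_eq_mul_integral hf.aestronglyMeasurable hg.aestronglyMeasurable

theorem integral_mul_condExp_of_stronglyMeasurable (hm : m ≤ mΩ) [SigmaFinite (μ.trim hm)]
    {f g : Ω → ℝ} (hg : StronglyMeasurable[m] g) (hgf : Integrable (g * f) μ)
    (hf : Integrable f μ) :
    ∫ ω, g ω * μ[f | m] ω ∂μ = ∫ ω, g ω * f ω ∂μ :=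
  (integral_congr_ae (condExp_mul_of_stronglyMeasurable_left hg hgf hf).symm).trans
    (integral_condExp hm)

theorem integrable_mul_of_integrable_mul_condExp (hm : m ≤ mΩ) [SigmaFinite (μ.trim hm)]
    {g w : Ω → ℝ} (hg : StronglyMeasurable[m] g) (hg0 : 0 ≤ᵐ[μ] g) (hw0 : 0 ≤ᵐ[μ] w)
    (hw : Integrable w μ) (hgw : Integrable (g * μ[w | m]) μ) :
    Integrable (g * w) μ := by
  set gn : ℕ → Ω → ℝ := fun n ω => min (g ω) n
  have hgn : ∀ n, StronglyMeasurable[m] (gn n) := fun n =>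
    (hg.measurable.min measurable_const).stronglyMeasurable
  have hgn_bdd : ∀ n, ∀ᵐ ω ∂μ, ‖gn n ω‖ ≤ n := fun n => by
    filter_upwards [hg0] with ω hω
    rw [Real.norm_of_nonneg (le_min hω n.cast_nonneg)]
    exact min_le_right _ _
  have hgnw : ∀ n, Integrable (gn n * w) μ := fun n =>
    hw.bdd_mul ((hgn n).mono hm).aestronglyMeasurable (hgn_bdd n)
  have hbound : ∀ n, ∫ ω, gn n ω * w ω ∂μ ≤ ∫ ω, g ω * μ[w | m] ω ∂μ := fun n => by
    rw [← integral_mul_condExp_of_stronglyMeasurable hm (hgn n) (hgnw n) hw]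
    refine integral_mono_ae (integrable_condExp.bdd_mul ((hgn n).mono hm).aestronglyMeasurable
      (hgn_bdd n)) hgw ?_
    filter_upwards [condExp_nonneg (m := m) hw0] with ω hω
    exact mul_le_mul_of_nonneg_right (min_le_left _ _) hω
  have hmono : ∀ᵐ ω ∂μ, Monotone fun n => ENNReal.ofReal (gn n ω * w ω) := by
    filter_upwards [hw0] with ω hω n k hnk
    exact ENNReal.ofReal_le_ofReal (mul_le_mul_of_nonneg_right
      (min_le_min_left _ (Nat.cast_le.2 hnk)) hω)
  have hlim : ∀ᵐ ω ∂μ, Tendsto (fun n => ENNReal.ofReal (gn n ω * w ω)) atTop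
      (𝓝 (ENNReal.ofReal (g ω * w ω))) := by
    refine ae_of_all _ fun ω => tendsto_atTop_of_eventually_const (i₀ := ⌈g ω⌉₊) fun n hn => ?_
    rw [show gn n ω = g ω from min_eq_left ((Nat.le_ceil _).trans (Nat.cast_le.2 hn))]
  have hlint : ∫⁻ ω, ENNReal.ofReal (g ω * w ω) ∂μ
      ≤ ENNReal.ofReal (∫ ω, g ω * μ[w | m] ω ∂μ) := by
    refine le_of_tendsto' (lintegral_tendsto_of_tendsto_of_monotone
      (fun n => (hgnw n).aemeasurable.ennreal_ofReal) hmono hlim) fun n => ?_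
    rw [← ofReal_integral_eq_lintegral_ofReal (hgnw n)]
    · exact ENNReal.ofReal_le_ofReal (hbound n)
    · filter_upwards [hg0, hw0] with ω h1 h2
      exact mul_nonneg (le_min h1 n.cast_nonneg) h2
  refine ⟨(hg.mono hm).aestronglyMeasurable.mul hw.1, ?_⟩
  refine (hasFiniteIntegral_iff_ofReal ?_).2 (hlint.trans_lt ENNReal.ofReal_lt_top)
  filter_upwards [hg0, hw0] with ω h1 h2
  exact mul_nonneg h1 h2

theorem integrable_div_condExp (hm : m ≤ mΩ) [IsFiniteMeasure μ] {w : Ω → ℝ}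
    (hw0 : 0 ≤ᵐ[μ] w) (hw : Integrable w μ) :
    Integrable (fun ω => w ω / μ[w | m] ω) μ := by
  have hinv : StronglyMeasurable[m] (μ[w | m])⁻¹ :=
    stronglyMeasurable_condExp.measurable.inv.stronglyMeasurable
  have hinv_mul : Integrable ((μ[w | m])⁻¹ * μ[w | m]) μ := by
    refine Integrable.of_bound ((hinv.mono hm).aestronglyMeasurable.mul
      integrable_condExp.1) 1 (ae_of_all _ fun ω => ?_)
    simp only [Pi.mul_apply, Pi.inv_apply]
    rcases eq_or_ne (μ[w | m] ω) 0 with h | h <;> simp [h]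
  refine (integrable_mul_of_integrable_mul_condExp hm hinv ?_ hw0 hw hinv_mul).congr
    (ae_of_all _ fun ω => (div_eq_inv_mul _ _).symm)
  filter_upwards [condExp_nonneg (m := m) hw0] with ω hω using inv_nonneg.2 hω

theorem integral_mul_div_condExp_of_stronglyMeasurable (hm : m ≤ mΩ)
    [SigmaFinite (μ.trim hm)]
    {g w : Ω → ℝ} (hg : StronglyMeasurable[m] g) (hw : Integrable w μ)
    (hpos : ∀ᵐ ω ∂μ, 0 < μ[w | m] ω) (hgw : Integrable (fun ω => g ω * w ω / μ[w | m] ω) μ) :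
    ∫ ω, g ω * w ω / μ[w | m] ω ∂μ = ∫ ω, g ω ∂μ := by
  have hg' : StronglyMeasurable[m] (g / μ[w | m]) :=
    (hg.measurable.div stronglyMeasurable_condExp.measurable).stronglyMeasurable
  calc ∫ ω, g ω * w ω / μ[w | m] ω ∂μ = ∫ ω, (g / μ[w | m]) ω * w ω ∂μ := by
        simp only [Pi.div_apply, div_mul_eq_mul_div]
    _ = ∫ ω, (g / μ[w | m]) ω * μ[w | m] ω ∂μ :=
        (integral_mul_condExp_of_stronglyMeasurable hm hg'
          (hgw.congr (ae_of_all _ fun ω => (div_mul_eq_mul_div _ _ _).symm)) hw).symm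
    _ = ∫ ω, g ω ∂μ := integral_congr_ae <| by
        filter_upwards [hpos] with ω hω using div_mul_cancel₀ _ hω.ne'

theorem integral_eq_integral_mul_div_condExp (hm : m ≤ mΩ) [IsFiniteMeasure μ]
    {X w : Ω → ℝ} (hX : AEStronglyMeasurable X μ) {C : ℝ} (hXC : ∀ᵐ ω ∂μ, |X ω| ≤ C)
    (hw0 : 0 ≤ᵐ[μ] w) (hw : Integrable w μ) (hpos : ∀ᵐ ω ∂μ, 0 < μ[w | m] ω)
    (hXw : μ[X * w | m] =ᵐ[μ] μ[X | m] * μ[w | m]) :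
    ∫ ω, X ω ∂μ = ∫ ω, X ω * w ω / μ[w | m] ω ∂μ := by
  have hXC' : ∀ᵐ ω ∂μ, ‖X ω‖ ≤ C := by simpa only [Real.norm_eq_abs] using hXC
  have hinv : StronglyMeasurable[m] (μ[w | m])⁻¹ :=
    stronglyMeasurable_condExp.measurable.inv.stronglyMeasurable
  have hint : Integrable ((μ[w | m])⁻¹ * (X * w)) μ := by
    refine ((integrable_div_condExp hm hw0 hw).bdd_mul hX hXC').congr (ae_of_all _ fun ω => ?_)
    simp only [Pi.mul_apply, Pi.inv_apply]
    ring
  symm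
  calc ∫ ω, X ω * w ω / μ[w | m] ω ∂μ = ∫ ω, (μ[w | m] ω)⁻¹ * (X * w) ω ∂μ := by
        congr with ω
        simp only [Pi.mul_apply]
        ring
    _ = ∫ ω, (μ[w | m] ω)⁻¹ * μ[X * w | m] ω ∂μ :=
        (integral_mul_condExp_of_stronglyMeasurable hm hinv hint
          (hw.bdd_mul hX hXC')).symm
    _ = ∫ ω, μ[X | m] ω ∂μ := integral_congr_ae <| by
        filter_upwards [hXw, hpos] with ω h hω
        rw [h, Pi.mul_apply, mul_comm (μ[X | m] ω), inv_mul_cancel_left₀ hω.ne']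
    _ = ∫ ω, X ω ∂μ := integral_condExp hm

theorem integral_eq_integral_mul_div_condExp_of_ae_eq (hmm' : m ≤ m')
    (hm' : m' ≤ mΩ) [IsFiniteMeasure μ] {q w Y : Ω → ℝ} (hq : StronglyMeasurable[m] q)
    (hw' : StronglyMeasurable[m'] w) (hw0 : 0 ≤ᵐ[μ] w) (hw : Integrable w μ)
    (hpos : ∀ᵐ ω ∂μ, 0 < μ[w | m] ω) (hY : AEStronglyMeasurable Y μ) {C : ℝ}
    (hYC : ∀ᵐ ω ∂μ, |Y ω| ≤ C) (hqY : ∀ᵐ ω ∂μ, w ω ≠ 0 → q ω = μ[Y | m'] ω) :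
    ∫ ω, q ω ∂μ = ∫ ω, Y ω * w ω / μ[w | m] ω ∂μ := by
  have hYC' : ∀ᵐ ω ∂μ, ‖Y ω‖ ≤ C := by simpa only [Real.norm_eq_abs] using hYC
  have hg : StronglyMeasurable[m'] (w / μ[w | m]) :=
    (hw'.measurable.div (stronglyMeasurable_condExp.mono hmm').measurable).stronglyMeasurable
  have hgY : Integrable (w / μ[w | m] * Y) μ :=
    ((integrable_div_condExp (hmm'.trans hm') hw0 hw).bdd_mul hY hYC').congr
      (ae_of_all _ fun ω => mul_comm _ _)
  have hYi : Integrable Y μ := Integrable.of_bound hY C hYC'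
  have hqw : (fun ω => q ω * w ω / μ[w | m] ω) =ᵐ[μ] w / μ[w | m] * μ[Y | m'] := by
    filter_upwards [hqY] with ω hω
    by_cases h : w ω = 0
    · simp [h]
    · rw [hω h, Pi.mul_apply, Pi.div_apply]
      ring
  calc ∫ ω, q ω ∂μ = ∫ ω, q ω * w ω / μ[w | m] ω ∂μ :=
        (integral_mul_div_condExp_of_stronglyMeasurable (hmm'.trans hm') hq hw hpos
          ((integrable_condExp.congr (condExp_mul_of_stronglyMeasurable_left hg hgY hYi)).congr
            hqw.symm)).symm
    _ = ∫ ω, (w / μ[w | m]) ω * μ[Y | m'] ω ∂μ := integral_congr_ae hqw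
    _ = ∫ ω, Y ω * w ω / μ[w | m] ω ∂μ := by
        rw [integral_mul_condExp_of_stronglyMeasurable hm' hg hgY hYi]
        congr with ω
        simp only [Pi.div_apply]
        ring

end

theorem stmt9_general {Ω : Type*} {mΩ : MeasurableSpace Ω} [StandardBorelSpace Ω]
    (μ : Measure Ω) [IsProbabilityMeasure μ]
    {𝒜 : Type*} [Fintype 𝒜] [DecidableEq 𝒜] [MeasurableSpace 𝒜] [DiscreteMeasurableSpace 𝒜]
    {γ : Type*} [MeasurableSpace γ]
    (A : Ω → 𝒜) (Z : Ω → γ) (Ypot : 𝒜 → Ω → ℝ) (Yobs : Ω → ℝ)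
    (hA : Measurable A) (hZ : Measurable Z)
    (hbdd : ∃ C : ℝ, ∀ b ω, |Ypot b ω| ≤ C)
    (hYmeas : ∀ b, Measurable (Ypot b))
    (hconsist : ∀ ω, Yobs ω = Ypot (A ω) ω)
    (hci : ∀ b : 𝒜, CondIndepFun (MeasurableSpace.comap Z inferInstance) hZ.comap_le
      (Ypot b) A μ)
    (hpos : ∀ b : 𝒜, ∀ᵐ ω ∂μ, 0 < (μ[(fun ω' => if A ω' = b then (1 : ℝ) else 0) |
      MeasurableSpace.comap Z inferInstance]) ω)
    (a : 𝒜) :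
    (∀ h : 𝒜 × γ → ℝ, Measurable h →
      ((fun ω => h (A ω, Z ω)) =ᵐ[μ]
        μ[Yobs | MeasurableSpace.comap (fun ω => (A ω, Z ω)) inferInstance]) →
      Integrable (fun ω => h (a, Z ω)) μ →
      ∫ ω, h (a, Z ω) ∂μ = ∫ ω, Ypot a ω ∂μ) ∧
    ∫ ω, Ypot a ω ∂μ =
      ∫ ω, (if A ω = a then Yobs ω else 0) /
        (μ[(fun ω' => if A ω' = a then (1 : ℝ) else 0) |
          MeasurableSpace.comap Z inferInstance]) ω ∂μ := by
  obtain ⟨C, hC⟩ := hbdd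
  set w : Ω → ℝ := fun ω => if A ω = a then 1 else 0
  have hwAZ : Measurable[MeasurableSpace.comap (fun ω => (A ω, Z ω)) inferInstance] w :=
    (measurable_of_finite fun b : 𝒜 => if b = a then (1 : ℝ) else 0).comp
      (measurable_fst.comp (comap_measurable _))
  have hwm : Measurable w := hwAZ.mono (hA.prodMk hZ).comap_le le_rfl
  have hw : Integrable w μ := Integrable.of_bound hwm.aestronglyMeasurable 1
    (ae_of_all _ fun ω => by by_cases h : A ω = a <;> simp [w, h])
  have hw0 : 0 ≤ᵐ[μ] w := ae_of_all _ fun ω => by positivity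
  have hYa : Integrable (Ypot a) μ :=
    Integrable.of_bound (hYmeas a).aestronglyMeasurable C (ae_of_all _ (hC a))
  have hipw : ∫ ω, Ypot a ω ∂μ =
      ∫ ω, Ypot a ω * w ω / μ[w | MeasurableSpace.comap Z inferInstance] ω ∂μ :=
    integral_eq_integral_mul_div_condExp hZ.comap_le (hYmeas a).aestronglyMeasurable
      (ae_of_all _ (hC a)) hw0 hw (hpos a)
      (((hci a).comp measurable_id
        (measurable_of_finite fun b : 𝒜 => if b = a then (1 : ℝ) else 0)).condExp_mul_ae_eq
        (hYmeas a) hwm hYa hw (hw.bdd_mul (hYmeas a).aestronglyMeasurable (ae_of_all _ (hC a))))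
  have hYa_obs : ∀ ω, Ypot a ω * w ω = if A ω = a then Yobs ω else 0 := fun ω => by
    by_cases h : A ω = a <;> simp [w, h, hconsist]
  have hYobs_obs : ∀ ω, Yobs ω * w ω = if A ω = a then Yobs ω else 0 := fun ω => by
    by_cases h : A ω = a <;> simp [w, h]
  refine ⟨fun h hh hver _ => ?_, hipw.trans (by simp only [hYa_obs])⟩
  have hYobs : Measurable Yobs :=
    (funext hconsist : Yobs = _) ▸ measurable_eval_of_countable hA hYmeas
  have hAZ_obs : ∀ᵐ ω ∂μ, w ω ≠ 0 →
      h (a, Z ω) = μ[Yobs | MeasurableSpace.comap (fun ω => (A ω, Z ω)) inferInstance] ω := by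
    filter_upwards [hver] with ω hω hwω
    rw [← hω, show A ω = a by by_contra hne; simp [w, hne] at hwω]
  have hZ_AZ : MeasurableSpace.comap Z inferInstance ≤
      MeasurableSpace.comap (fun ω => (A ω, Z ω)) inferInstance :=
    (measurable_snd.comp (comap_measurable fun ω => (A ω, Z ω))).comap_le
  rw [integral_eq_integral_mul_div_condExp_of_ae_eq (q := fun ω => h (a, Z ω))
    hZ_AZ (hA.prodMk hZ).comap_le
    (hh.comp (measurable_const.prodMk (comap_measurable Z))).stronglyMeasurable
    hwAZ.stronglyMeasurable hw0 hw (hpos a) hYobs.aestronglyMeasurable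
    (ae_of_all _ fun ω => hconsist ω ▸ hC _ ω) hAZ_obs]
  simp only [hYa_obs, hYobs_obs, hipw]

/-- With `A` taking values in a finite set, positivity `P(A = a | Z) > 0` a.s., bounded potential
outcomes `Y(a)` with `Y(a) ⫫ A | Z`, and consistency `Y = Y(A)`: every measurable version
`h(A, Z)` of `E[Y | A, Z]` satisfies `E[h(a, Z)] = E[Y(a)]`, and the inverse-probability-weighting
identity `E[Y(a)] = E[ 1{A = a} Y / P(A = a | Z) ]` holds. -/
theorem stmt9 {Ω : Type*} {mΩ : MeasurableSpace Ω} [StandardBorelSpace Ω]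
    (μ : Measure Ω) [IsProbabilityMeasure μ]
    {𝒜 : Type*} [Fintype 𝒜] [DecidableEq 𝒜] [MeasurableSpace 𝒜] [DiscreteMeasurableSpace 𝒜]
    {γ : Type*} [MeasurableSpace γ] [StandardBorelSpace γ]
    (A : Ω → 𝒜) (Z : Ω → γ) (Ypot : 𝒜 → Ω → ℝ) (Yobs : Ω → ℝ)
    (hA : Measurable A) (hZ : Measurable Z)
    (hbdd : ∃ C : ℝ, ∀ b ω, |Ypot b ω| ≤ C)
    (hYmeas : ∀ b, Measurable (Ypot b))
    (hconsist : ∀ ω, Yobs ω = Ypot (A ω) ω)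
    (hci : ∀ b : 𝒜, CondIndepFun (MeasurableSpace.comap Z inferInstance) hZ.comap_le
      (Ypot b) A μ)
    (hpos : ∀ b : 𝒜, ∀ᵐ ω ∂μ, 0 < (μ[(fun ω' => if A ω' = b then (1 : ℝ) else 0) |
      MeasurableSpace.comap Z inferInstance]) ω)
    (a : 𝒜) :
    (∀ h : 𝒜 × γ → ℝ, Measurable h →
      ((fun ω => h (A ω, Z ω)) =ᵐ[μ]
        μ[Yobs | MeasurableSpace.comap (fun ω => (A ω, Z ω)) inferInstance]) →
      Integrable (fun ω => h (a, Z ω)) μ →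
      ∫ ω, h (a, Z ω) ∂μ = ∫ ω, Ypot a ω ∂μ) ∧
    ∫ ω, Ypot a ω ∂μ =
      ∫ ω, (if A ω = a then Yobs ω else 0) /
        (μ[(fun ω' => if A ω' = a then (1 : ℝ) else 0) |
          MeasurableSpace.comap Z inferInstance]) ω ∂μ :=
  stmt9_general (mΩ := mΩ) μ A Z Ypot Yobs hA hZ hbdd hYmeas hconsist hci hpos a
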